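/- arXiv:1606.08116 — 2 statements merged into one kernel-verified Lean document; each statement's English description precedes it below -/
import Mathlib

section
/- For all LTL formulas φ₁ and φ₂ and every infinite word ρ: ρ ⊨ FG(φ₁ ∨ Fφ₂) if and only if ρ ⊨ FGφ₁ ∨ GFφ₂. -/
/-- Syntax of LTL formulas (with general negation, next, until, weak until). -/
inductive LTL (AP : Type) : Type where
  | tru : LTL AP
  | atom : AP → LTL AP
  | neg : LTL AP → LTL AP
  | conj : LTL AP → LTL AP → LTL AP
  | disj : LTL AP → LTL AP → LTL AP
  | next : LTL AP → LTL AP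
  | untl : LTL AP → LTL AP → LTL AP
  | wuntl : LTL AP → LTL AP → LTL AP

/-- Infinite words over the alphabet `2^AP`. -/
def Word (AP : Type) := ℕ → Set AP

/-- The suffix `ρ[i..]` of an infinite word. -/
def Word.suffix {AP : Type} (ρ : Word AP) (i : ℕ) : Word AP := fun n => ρ (n + i)

/-- Satisfaction of an LTL formula on an infinite word. -/
def sat {AP : Type} : Word AP → LTL AP → Prop
  | _, .tru => True
  | ρ, .atom a => a ∈ ρ 0
  | ρ, .neg φ => ¬ sat ρ φ
  | ρ, .conj φ ψ => sat ρ φ ∧ sat ρ ψ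
  | ρ, .disj φ ψ => sat ρ φ ∨ sat ρ ψ
  | ρ, .next φ => sat (ρ.suffix 1) φ
  | ρ, .untl φ ψ => ∃ i, sat (ρ.suffix i) ψ ∧ ∀ j < i, sat (ρ.suffix j) φ
  | ρ, .wuntl φ ψ =>
      (∀ i, sat (ρ.suffix i) φ) ∨ ∃ i, sat (ρ.suffix i) ψ ∧ ∀ j < i, sat (ρ.suffix j) φ

/-- Eventually: `F φ = ⊤ U φ`. -/
def LTL.ev {AP : Type} (φ : LTL AP) : LTL AP := LTL.untl LTL.tru φ

/-- Always: `G φ = φ W ⊥`. -/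
def LTL.alw {AP : Type} (φ : LTL AP) : LTL AP := LTL.wuntl φ (LTL.neg LTL.tru)

/-- Semantic equivalence of formulas on all infinite words. -/
def LTLequiv {AP : Type} (φ ψ : LTL AP) : Prop := ∀ ρ : Word AP, sat ρ φ ↔ sat ρ ψ

/-- Prepend a finite word `l` to an infinite word `ρ`. -/
def prepend {AP : Type} (l : List (Set AP)) (ρ : Word AP) : Word AP :=
  fun i => if h : i < l.length then l.get ⟨i, h⟩ else ρ (i - l.length)

/-- A fairness formula: satisfaction is closed under suffixes and under prepending
arbitrary finite prefixes. -/
def Fairness {AP : Type} (φ : LTL AP) : Prop :=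
  (∀ ρ : Word AP, sat ρ φ → ∀ i, sat (ρ.suffix i) φ) ∧
  (∀ ρ : Word AP, sat ρ φ → ∀ ρ₁ : List (Set AP), sat (prepend ρ₁ ρ) φ)

/-- The cyclic (periodic) word `σ^ω` obtained by repeating a nonempty finite word `σ`. -/
def cyc {AP : Type} (σ : List (Set AP)) (h : σ ≠ []) : Word AP :=
  fun i => σ.get ⟨i % σ.length, Nat.mod_lt i (List.length_pos_iff.mpr h)⟩

/-- Propositional formulas: atoms and negated atoms combined with `∧`, `∨`. -/
inductive PropForm (AP : Type) : Type where
  | atom : AP → PropForm AP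
  | natom : AP → PropForm AP
  | conj : PropForm AP → PropForm AP → PropForm AP
  | disj : PropForm AP → PropForm AP → PropForm AP

/-- Satisfaction of a propositional formula at a single letter `A ∈ 2^AP`. -/
def psat {AP : Type} (A : Set AP) : PropForm AP → Prop
  | .atom a => a ∈ A
  | .natom a => a ∉ A
  | .conj l₁ l₂ => psat A l₁ ∧ psat A l₂
  | .disj l₁ l₂ => psat A l₁ ∨ psat A l₂

/-- Embedding of propositional formulas into LTL. -/
def PropForm.toLTL {AP : Type} : PropForm AP → LTL AP
  | .atom a => .atom a
  | .natom a => .neg (.atom a)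
  | .conj l₁ l₂ => .conj l₁.toLTL l₂.toLTL
  | .disj l₁ l₂ => .disj l₁.toLTL l₂.toLTL

/-- A finite Kripke structure with a total transition relation. -/
structure Kripke (AP : Type) where
  S : Type
  [fin : Fintype S]
  init : S
  T : S → S → Prop
  total : ∀ s, ∃ t, T s t
  L : S → Set AP

/-- `π` is an infinite path of `K` starting at the initial state. -/
def Kripke.IsPath {AP : Type} (K : Kripke AP) (π : ℕ → K.S) : Prop :=
  π 0 = K.init ∧ ∀ i, K.T (π i) (π (i + 1))

/-- There is a nonempty finite path from `s` to `t` staying inside `B`. -/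
def Kripke.ConnIn {AP : Type} (K : Kripke AP) (B : Set K.S) (s t : K.S) : Prop :=
  ∃ n > 0, ∃ f : ℕ → K.S, f 0 = s ∧ f n = t ∧
    (∀ i < n, K.T (f i) (f (i + 1))) ∧ (∀ i ≤ n, f i ∈ B)

/-- `B` is a nontrivial strongly connected set of states. -/
def Kripke.IsSCSet {AP : Type} (K : Kripke AP) (B : Set K.S) : Prop :=
  ∀ s ∈ B, ∀ t ∈ B, K.ConnIn B s t

/-- Some state of `B` is reachable from the initial state. -/
def Kripke.Reachable {AP : Type} (K : Kripke AP) (B : Set K.S) : Prop :=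
  ∃ s ∈ B, ∃ n, ∃ f : ℕ → K.S, f 0 = K.init ∧ f n = s ∧ ∀ i < n, K.T (f i) (f (i + 1))

/-- The periodic word `({a}{}{a,c})^ω`. -/
def word1 {AP : Type} (a c : AP) : Word AP :=
  fun i => if i % 3 = 0 then {a} else if i % 3 = 1 then ∅ else {a, c}

/-- The periodic word `({a}{a,c}{})^ω`. -/
def word2 {AP : Type} (a c : AP) : Word AP :=
  fun i => if i % 3 = 0 then {a} else if i % 3 = 1 then {a, c} else ∅

open Filter

/- If `q` holds infinitely often, both sides hold; otherwise `∃ k ≥ n, q k` eventually fails,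
so the left side reduces to `∀ᶠ n, p n`. -/
theorem Filter.eventually_or_exists_ge_iff {α : Type*} [SemilatticeSup α] [Nonempty α]
    (p q : α → Prop) :
    (∀ᶠ n in atTop, p n ∨ ∃ k ≥ n, q k) ↔ (∀ᶠ n in atTop, p n) ∨ ∃ᶠ n in atTop, q n := by
  by_cases hq : ∃ᶠ n in atTop, q n
  · have hF : ∀ n, ∃ k ≥ n, q k := frequently_atTop.mp hq
    simp only [hF, hq, or_true, eventually_true]
  · obtain ⟨N, hN⟩ := eventually_atTop.mp (not_frequently.mp hq)
    have hF : ∀ᶠ n in atTop, ¬∃ k ≥ n, q k :=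
      eventually_atTop.mpr ⟨N, fun n hn ⟨k, hk, hqk⟩ => hN k (hn.trans hk) hqk⟩
    simp only [hq, or_false]
    exact ⟨fun h => (h.and hF).mono fun n ⟨hn, hnF⟩ => hn.resolve_right hnF,
      fun h => h.mono fun n hn => Or.inl hn⟩

namespace Word

variable {AP : Type}

lemma suffix_suffix (ρ : Word AP) (i j : ℕ) : (ρ.suffix i).suffix j = ρ.suffix (j + i) := by
  funext n
  simp only [suffix, Nat.add_assoc]

end Word

namespace LTL

variable {AP : Type} (ρ : Word AP) (φ ψ : LTL AP)

lemma sat_disj : sat ρ (φ.disj ψ) ↔ sat ρ φ ∨ sat ρ ψ := Iff.rfl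

lemma sat_ev : sat ρ φ.ev ↔ ∃ i, sat (ρ.suffix i) φ := by
  simp only [ev, sat, implies_true, and_true]

lemma sat_alw : sat ρ φ.alw ↔ ∀ i, sat (ρ.suffix i) φ := by
  simp only [alw, sat, not_true, false_and, exists_false, or_false]

lemma sat_suffix_ev (i : ℕ) : sat (ρ.suffix i) φ.ev ↔ ∃ k ≥ i, sat (ρ.suffix k) φ := by
  simp only [sat_ev, Word.suffix_suffix]
  exact ⟨fun ⟨k, hk⟩ => ⟨k + i, Nat.le_add_left i k, hk⟩,
    fun ⟨k, hik, hk⟩ => ⟨k - i, by rwa [Nat.sub_add_cancel hik]⟩⟩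

lemma sat_alw_ev : sat ρ φ.alw.ev ↔ ∀ᶠ i in atTop, sat (ρ.suffix i) φ := by
  simp only [sat_ev, sat_alw, Word.suffix_suffix, eventually_atTop]
  exact ⟨fun ⟨i, hi⟩ => ⟨i, fun k hik => by simpa only [Nat.sub_add_cancel hik] using hi (k - i)⟩,
    fun ⟨i, hi⟩ => ⟨i, fun k => hi (k + i) (Nat.le_add_left i k)⟩⟩

lemma sat_ev_alw : sat ρ φ.ev.alw ↔ ∃ᶠ i in atTop, sat (ρ.suffix i) φ := by
  simp only [sat_alw, frequently_atTop, ← sat_suffix_ev]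

end LTL

/-- ρ ⊨ FG(φ₁ ∨ Fφ₂) iff ρ ⊨ FGφ₁ ∨ GFφ₂. -/
theorem FG_disj_F {AP : Type} (ρ : Word AP) (φ₁ φ₂ : LTL AP) :
    sat ρ ((φ₁.disj φ₂.ev).alw.ev) ↔ sat ρ (LTL.disj φ₁.alw.ev φ₂.ev.alw) := by
  simp only [LTL.sat_alw_ev, LTL.sat_disj, LTL.sat_ev_alw, LTL.sat_suffix_ev]
  exact eventually_or_exists_ge_iff _ _
end

section
/- For every nonempty finite word σ over 2^AP and all LTL formulas φ₁, φ₂: σ^ω ⊨ F(φ₁ ∧ Fφ₂) if and only if σ^ω ⊨ Fφ₁ ∧ Fφ₂. -/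
theorem Word.suffix_suffix_s11 {AP : Type} (ρ : Word AP) (i j : ℕ) :
    (ρ.suffix j).suffix i = ρ.suffix (i + j) := by
  funext n
  simp only [Word.suffix, Nat.add_assoc]

theorem sat_ev_iff {AP : Type} (ρ : Word AP) (φ : LTL AP) :
    sat ρ φ.ev ↔ ∃ i, sat (ρ.suffix i) φ := by
  simp [LTL.ev, sat]

theorem sat_ev_of_sat_ev_conj_ev {AP : Type} {ρ : Word AP} {φ₁ φ₂ : LTL AP}
    (hρ : sat ρ (φ₁.conj φ₂.ev).ev) : sat ρ (LTL.conj φ₁.ev φ₂.ev) := by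
  obtain ⟨i, h₁, h₂⟩ := (sat_ev_iff _ _).1 hρ
  obtain ⟨j, h₂⟩ := (sat_ev_iff _ _).1 h₂
  rw [Word.suffix_suffix_s11] at h₂
  exact ⟨(sat_ev_iff _ _).2 ⟨i, h₁⟩, (sat_ev_iff _ _).2 ⟨j + i, h₂⟩⟩

theorem Function.Periodic.word_suffix_add_mul {AP : Type} {ρ : Word AP} {p : ℕ}
    (hρ : Function.Periodic ρ p) (i k : ℕ) : ρ.suffix (i + k * p) = ρ.suffix i := by
  funext n
  simp only [Word.suffix, ← Nat.add_assoc]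
  exact hρ.nat_mul k (n + i)

-- A witness `j` for `F φ` reappears at `j + i * p ≥ i`.
theorem Function.Periodic.sat_suffix_ev {AP : Type} {ρ : Word AP} {p : ℕ}
    (hρ : Function.Periodic ρ p) (hp : 0 < p) {φ : LTL AP} (hφ : sat ρ φ.ev) (i : ℕ) :
    sat (ρ.suffix i) φ.ev := by
  obtain ⟨j, hj⟩ := (sat_ev_iff _ _).1 hφ
  refine (sat_ev_iff _ _).2 ⟨j + i * p - i, ?_⟩
  have hi : i ≤ j + i * p := le_add_left (Nat.le_mul_of_pos_right i hp)
  rwa [Word.suffix_suffix_s11, Nat.sub_add_cancel hi, hρ.word_suffix_add_mul]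

theorem cyc_periodic {AP : Type} (σ : List (Set AP)) (h : σ ≠ []) :
    Function.Periodic (cyc σ h) σ.length := by
  intro i
  simp only [cyc, Nat.add_mod_right]

/-- On cyclic words: σ^ω ⊨ F(φ₁ ∧ Fφ₂) iff σ^ω ⊨ Fφ₁ ∧ Fφ₂. -/
theorem F_conj_F_c {AP : Type} (σ : List (Set AP)) (h : σ ≠ []) (φ₁ φ₂ : LTL AP) :
    sat (cyc σ h) ((φ₁.conj φ₂.ev).ev) ↔ sat (cyc σ h) (LTL.conj φ₁.ev φ₂.ev) := by
  refine ⟨sat_ev_of_sat_ev_conj_ev, fun ⟨h₁, h₂⟩ => ?_⟩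
  obtain ⟨i, hi⟩ := (sat_ev_iff _ _).1 h₁
  have hL : 0 < σ.length := List.length_pos_iff.mpr h
  exact (sat_ev_iff _ _).2 ⟨i, hi, (cyc_periodic σ h).sat_suffix_ev hL h₂ i⟩
end
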